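/- arXiv:1706.04893 — 4 statements merged into one kernel-verified Lean document; each statement's English description precedes it below -/
import Mathlib

section
/- Lagrange inversion formula: if f is a formal power series over a field of characteristic zero with f(0) = 0 and nonzero coefficient of t, then for every k ≥ 1, the coefficient of t^k in f^{⟨-1⟩} equals (1/k) times the coefficient of u^{k-1} in (u/f(u))^k. -/
open PowerSeries Finset

/-- Composition `f ∘ g` of formal power series (meaningful when `g` has zero
constant term). -/
noncomputable def PowerSeries.comp {R : Type*} [CommRing R] (f g : R⟦X⟧) : R⟦X⟧ :=
  PowerSeries.mk fun k => ∑ n ∈ Finset.range (k + 1), coeff n f * coeff k (g ^ n)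

/-! Differentiating `g (f t) = t` gives `g'(f) · f' = 1`. Multiply by `q⁻¹ ^ k = (t / f) ^ k` and
expand `g'(f) = ∑ (n + 1) g_{n+1} f ^ n`: in the coefficient of `t ^ (k - 1)` the term `n` contributes
`[t ^ j] f' q⁻¹ ^ (j + 1)` with `j = k - 1 - n`. For `j ≥ 1` this is the residue of
`f' / f ^ (j + 1) = -(f ^ (-j))' / j`, which vanishes since a derivative has no residue; for `j = 0`
it is `f'(0) / q(0) = 1`. Hence `[t ^ (k - 1)] q⁻¹ ^ k = k g_k`. -/

namespace PowerSeries

section CommRing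

variable {R : Type*} [CommRing R]

theorem coeff_pow_eq_zero_of_lt {g : R⟦X⟧} (hg : constantCoeff g = 0) {k n : ℕ} (h : k < n) :
    coeff k (g ^ n) = 0 :=
  coeff_of_lt_order _ ((Nat.cast_lt.2 h).trans_le (le_order_pow_of_constantCoeff_eq_zero n hg))

theorem coeff_subst_eq_sum_range (f : R⟦X⟧) {g : R⟦X⟧} (hg : constantCoeff g = 0) {k N : ℕ}
    (hk : k ≤ N) : coeff k (f.subst g) = ∑ n ∈ range (N + 1), coeff n f * coeff k (g ^ n) := by
  rw [coeff_subst' (HasSubst.of_constantCoeff_zero' hg)]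
  refine finsum_eq_sum_of_support_subset _ fun n hn => ?_
  rw [coe_range, Set.mem_Iio, Nat.lt_succ_iff]
  by_contra! hNn
  exact hn (by simp only [coeff_pow_eq_zero_of_lt hg (hk.trans_lt hNn), smul_zero])

theorem comp_eq_subst (f : R⟦X⟧) {g : R⟦X⟧} (hg : constantCoeff g = 0) : f.comp g = f.subst g := by
  ext k
  rw [comp, coeff_mk, coeff_subst_eq_sum_range f hg le_rfl]

theorem coeff_subst_mul_eq_sum_range (h : R⟦X⟧) {f : R⟦X⟧} (hf : constantCoeff f = 0)
    (G : R⟦X⟧) (m : ℕ) :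
    coeff m (h.subst f * G) = ∑ n ∈ range (m + 1), coeff n h * coeff m (f ^ n * G) := by
  simp_rw [coeff_mul, mul_sum, ← mul_assoc]
  rw [sum_comm]
  refine sum_congr rfl fun p hp => ?_
  rw [coeff_subst_eq_sum_range h hf (HasAntidiagonal.antidiagonal.fst_le hp), sum_mul]

theorem subst_eq_X_of_subst_eq_X {f g : R⟦X⟧} (hf0 : constantCoeff f = 0)
    (hf1 : IsUnit (coeff 1 f)) (hg : HasSubst g) (h : f.subst g = X) : g.subst f = X := by
  have hφ : f.substInvOfIsUnit hf1 = g := calc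
    _ = (f.substInvOfIsUnit hf1).subst (f.subst g) := by rw [h, X_subst]
    _ = subst g (subst f (f.substInvOfIsUnit hf1)) := by
      rw [subst_comp_subst_apply (HasSubst.of_constantCoeff_zero' hf0) hg]
    _ = g := by rw [subst_substInvOfIsUnit_left f hf0, subst_X hg]
  rw [← hφ, subst_substInvOfIsUnit_left f hf0]

end CommRing

theorem coeff_X_mul_derivative {R : Type*} [CommSemiring R] (w : R⟦X⟧) (n : ℕ) :
    coeff n (X * d⁄dX R w) = n * coeff n w := by
  cases n with
  | zero => simp
  | succ n => rw [coeff_succ_X_mul, coeff_derivative, mul_comm]; push_cast; rfl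

section Field

variable {K : Type*} [Field K] [CharZero K] {q : K⟦X⟧}

theorem coeff_derivative_X_mul_mul_inv_pow_eq_zero (hq : constantCoeff q ≠ 0) {j : ℕ}
    (hj : j ≠ 0) : coeff j (d⁄dX K (X * q) * q⁻¹ ^ (j + 1)) = 0 := by
  obtain ⟨i, rfl⟩ := Nat.exists_eq_succ_of_ne_zero hj
  have hqq : q * q⁻¹ = 1 := PowerSeries.mul_inv_cancel q hq
  have key : C ((i + 1 : ℕ) : K) * (d⁄dX K (X * q) * q⁻¹ ^ (i + 1 + 1)) =
      C ((i + 1 : ℕ) : K) * q⁻¹ ^ (i + 1) - X * d⁄dX K (q⁻¹ ^ (i + 1)) := by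
    simp only [Derivation.leibniz, derivative_pow, derivative_inv', derivative_X, smul_eq_mul,
      map_natCast, Nat.add_sub_cancel]
    push_cast
    linear_combination (((i : K⟦X⟧) + 1) * q⁻¹ ^ (i + 1)) * hqq
  have := congrArg (coeff (i + 1)) key
  rw [coeff_C_mul, map_sub, coeff_C_mul, coeff_X_mul_derivative, sub_self] at this
  exact (mul_eq_zero.mp this).resolve_left (Nat.cast_ne_zero.mpr hj)

theorem coeff_X_mul_pow_mul_derivative_mul_inv_pow (hq : constantCoeff q ≠ 0) {n m : ℕ}
    (h : n ≤ m) :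
    coeff m ((X * q) ^ n * (d⁄dX K (X * q) * q⁻¹ ^ (m + 1))) = if n = m then 1 else 0 := by
  obtain ⟨j, rfl⟩ := Nat.exists_eq_add_of_le h
  have hpow : q ^ n * q⁻¹ ^ n = 1 := by rw [← mul_pow, PowerSeries.mul_inv_cancel q hq, one_pow]
  have hshift : (X * q) ^ n * (d⁄dX K (X * q) * q⁻¹ ^ (n + j + 1)) =
      X ^ n * (d⁄dX K (X * q) * q⁻¹ ^ (j + 1)) := by
    rw [add_assoc, pow_add]
    linear_combination (X ^ n * d⁄dX K (X * q) * q⁻¹ ^ (j + 1)) * hpow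
  rw [hshift, add_comm n j, coeff_X_pow_mul]
  rcases j with _ | j
  · simp [coeff_zero_eq_constantCoeff, hq]
  · rw [if_neg (by omega), coeff_derivative_X_mul_mul_inv_pow_eq_zero hq j.succ_ne_zero]

end Field

end PowerSeries

theorem lagrange_inversion_general {K : Type*} [Field K] [CharZero K]
    (f g q : K⟦X⟧) (hf1 : coeff 1 f ≠ 0)
    (hq : f = X * q)
    (hg0 : constantCoeff g = 0) (hinv : f.comp g = X) :
    ∀ k : ℕ, 1 ≤ k →
      coeff k g = (1 / (k : K)) * coeff (k - 1) (q⁻¹ ^ k) := by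
  intro k hk
  obtain ⟨m, rfl⟩ := Nat.exists_eq_add_of_le' hk
  subst hq
  have hq0 : constantCoeff q ≠ 0 := by simpa [coeff_succ_X_mul] using hf1
  have hXq : constantCoeff (X * q) = 0 := by simp
  have hgf : g.subst (X * q) = X :=
    subst_eq_X_of_subst_eq_X hXq hf1.isUnit (HasSubst.of_constantCoeff_zero' hg0)
      (comp_eq_subst _ hg0 ▸ hinv)
  have hchain : (d⁄dX K g).subst (X * q) * d⁄dX K (X * q) = 1 := by
    rw [← derivative_subst (HasSubst.of_constantCoeff_zero' hXq), hgf, derivative_X]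
  have hcoeff : coeff m (q⁻¹ ^ (m + 1)) = (m + 1) * coeff (m + 1) g := calc
    coeff m (q⁻¹ ^ (m + 1)) =
        coeff m ((d⁄dX K g).subst (X * q) * (d⁄dX K (X * q) * q⁻¹ ^ (m + 1))) := by
      rw [← mul_assoc, hchain, one_mul]
    _ = ∑ n ∈ range (m + 1), coeff n (d⁄dX K g) * if n = m then 1 else 0 := by
      rw [coeff_subst_mul_eq_sum_range _ hXq]
      refine sum_congr rfl fun n hn => ?_
      rw [coeff_X_mul_pow_mul_derivative_mul_inv_pow hq0 (Nat.lt_succ_iff.mp (mem_range.mp hn))]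
    _ = coeff m (d⁄dX K g) := by simp
    _ = (m + 1) * coeff (m + 1) g := by rw [coeff_derivative, mul_comm]
  rw [Nat.add_sub_cancel, hcoeff]
  push_cast
  field_simp

/-- Lagrange's inversion formula: if `f` is a power series over a field of
characteristic zero with `f(0) = 0` and nonzero linear coefficient, writing
`f = X·q` (so that `u/f(u) = q⁻¹`), the coefficient of `t^k` in the
compositional inverse `g` of `f` equals `(1/k) · [u^{k-1}] (u/f(u))^k`. -/
theorem lagrange_inversion {K : Type*} [Field K] [CharZero K]
    (f g q : K⟦X⟧) (hf0 : constantCoeff f = 0) (hf1 : coeff 1 f ≠ 0)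
    (hq : f = X * q)
    (hg0 : constantCoeff g = 0) (hinv : f.comp g = X) :
    ∀ k : ℕ, 1 ≤ k →
      coeff k g = (1 / (k : K)) * coeff (k - 1) (q⁻¹ ^ k) :=
  lagrange_inversion_general f g q hf1 hq hg0 hinv
end

section
/- Define a_n = (1/(2n+1)) · Σ_{k=⌊n/2⌋}^{n} (-1)^{n-k} · C(2n+k,k) · C(k,n-k) · (1/6)^{2k-n} · (1/120)^{n-k}. Then for all n ≥ 2, the sequence satisfies the recurrence s_0(n)·a_n - s_1(n)·a_{n-1} + s_2(n)·a_{n-2} = 0, where s_0(n) = 128n(n-1)(2n+1)(2n-1)(5n-6), s_1(n) = 80(n-1)(2n-1)(5n-1)(15n^2-30n+14), and s_2(n) = 3(5n-1)(5n-4)(5n-6)(5n-7)(5n-8). -/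
/-!
Zeilberger's method.  Write `(2n+1) a_n = ∑_k F(n, k)`.  The certificate `G(m, k)`, a rational
multiple of the summand, satisfies the telescoping identity
`p₀(m) F(m+2, k) - p₁(m) F(m+1, k) + p₂(m) F(m, k) = G(m, k+1) - G(m, k)` for every `k`, and
summing over `k` gives the recurrence.  Extending `1/n!` by `0` to negative integers makes
`1/(z-1)! = z/z!` hold for every integer `z`, so each term of the identity is a polynomial
multiple of one common term and the identity needs no separate treatment of the boundary of the
summation range.
-/

open Finset Nat

namespace ZeilbergerRecurrence

-- The reciprocal of the Gamma function at `z + 1`.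
def invFactorial (z : ℤ) : ℚ := if z < 0 then 0 else ((z.toNat)! : ℚ)⁻¹

theorem invFactorial_of_neg {z : ℤ} (hz : z < 0) : invFactorial z = 0 := if_pos hz

theorem invFactorial_natCast (n : ℕ) : invFactorial n = ((n ! : ℕ) : ℚ)⁻¹ := by
  simp [invFactorial]

theorem invFactorial_sub_one (z : ℤ) : invFactorial (z - 1) = z * invFactorial z := by
  rcases lt_trichotomy z 0 with hz | rfl | hz
  · rw [invFactorial_of_neg hz, invFactorial_of_neg (by omega), mul_zero]
  · simp [invFactorial_of_neg]
  · obtain ⟨n, rfl⟩ : ∃ n : ℕ, z = n + 1 := ⟨z.toNat - 1, by omega⟩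
    rw [add_sub_cancel_right, show (n : ℤ) + 1 = ((n + 1 : ℕ) : ℤ) by push_cast; ring,
      invFactorial_natCast, invFactorial_natCast, Nat.factorial_succ]
    push_cast
    field_simp

theorem invFactorial_sub_two (z : ℤ) :
    invFactorial (z - 2) = (z - 1) * z * invFactorial z := by
  rw [show z - 2 = z - 1 - 1 by ring, invFactorial_sub_one, invFactorial_sub_one]
  push_cast
  ring

-- For `n/2 ≤ k ≤ n` this is the summand of `a_n` (see `explicit_eq_summand`): the powers of
-- `-1`, `1/6`, `1/120` combine to `(-1/20)^n (-10/3)^k`, and the two binomials to a multinomial.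
def summand (n k : ℕ) : ℚ :=
  (-1/20) ^ n * (-10/3) ^ k * ((2 * n + k)! / (2 * n)!) *
    invFactorial ((n : ℤ) - k) * invFactorial (2 * (k : ℤ) - n)

theorem summand_eq_zero {n k : ℕ} (h : n < k ∨ 2 * k < n) : summand n k = 0 := by
  rcases h with h | h
  · rw [summand, invFactorial_of_neg (by omega), mul_zero, zero_mul]
  · rw [summand, invFactorial_of_neg (show 2 * (k : ℤ) - n < 0 by omega), mul_zero]

-- Numerator of the rational certificate found by Zeilberger's algorithm.
def certificateFactor (n k : ℚ) : ℚ :=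
  (-2448 * n + 19396 * n ^ 2 - 41577 * n ^ 3 + 34014 * n ^ 4 - 9545 * n ^ 5)
  + k * (2376 - 19344 * n + 42357 * n ^ 2 - 35087 * n ^ 3 + 9960 * n ^ 4)
  + k ^ 2 * (404 - 1554 * n + 1311 * n ^ 2 - 305 * n ^ 3)
  + k ^ 3 * (-204 + 602 * n - 360 * n ^ 2)
  + k ^ 4 * (24 - 20 * n)

def certificate (m k : ℕ) : ℚ :=
  48 * certificateFactor (m + 2) k * (-1/20) ^ (m + 2) * (-10/3) ^ k *
    ((2 * m + k)! / (2 * m)!) * invFactorial ((m : ℤ) + 2 - k) *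
    invFactorial (2 * (k : ℤ) - m - 2)

def baseTerm (m k : ℕ) : ℚ :=
  (-1/20) ^ m * (-10/3) ^ k * ((2 * m + k)! / (2 * m + 4)!) *
    invFactorial ((m : ℤ) + 2 - k) * invFactorial (2 * (k : ℤ) - m)

theorem factorial_two_mul_add_four (m : ℕ) :
    ((2 * m + 4)! : ℚ) = (2 * m + 4) * (2 * m + 3) * (2 * m + 2) * (2 * m + 1) * (2 * m)! := by
  simp only [Nat.factorial_succ]; push_cast; ring

theorem summand_add_two (m k : ℕ) :
    summand (m + 2) k = (1/400) * (2 * m + k + 4) * (2 * m + k + 3) * (2 * m + k + 2) *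
      (2 * m + k + 1) * (2 * k - m - 1) * (2 * k - m) * baseTerm m k := by
  have hfac : ((2 * (m + 2) + k)! : ℚ) =
      (2 * m + k + 4) * (2 * m + k + 3) * (2 * m + k + 2) * (2 * m + k + 1) * (2 * m + k)! := by
    rw [show 2 * (m + 2) + k = 2 * m + k + 4 by ring]
    simp only [Nat.factorial_succ]; push_cast; ring
  have hinv : invFactorial (2 * (k : ℤ) - ↑(m + 2)) =
      (2 * k - m - 1) * (2 * k - m) * invFactorial (2 * (k : ℤ) - m) := by
    rw [show 2 * (k : ℤ) - ↑(m + 2) = (2 * k - m) - 2 by push_cast; ring, invFactorial_sub_two]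
    push_cast; ring
  rw [summand, baseTerm, hfac, hinv, show 2 * (m + 2) = 2 * m + 4 by ring]
  push_cast
  field_simp
  ring

theorem summand_add_one (m k : ℕ) :
    summand (m + 1) k = (-1/20) * (2 * m + k + 2) * (2 * m + k + 1) * (2 * m + 4) *
      (2 * m + 3) * (m + 2 - k) * (2 * k - m) * baseTerm m k := by
  have hfac : ((2 * (m + 1) + k)! : ℚ) = (2 * m + k + 2) * (2 * m + k + 1) * (2 * m + k)! := by
    rw [show 2 * (m + 1) + k = 2 * m + k + 2 by ring]
    simp only [Nat.factorial_succ]; push_cast; ring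
  have hfac' : ((2 * m + 4)! : ℚ) = (2 * m + 4) * (2 * m + 3) * (2 * (m + 1))! := by
    rw [show 2 * (m + 1) = 2 * m + 2 by ring]
    simp only [Nat.factorial_succ]; push_cast; ring
  have hp : invFactorial (↑(m + 1) - (k : ℤ)) =
      (m + 2 - k) * invFactorial ((m : ℤ) + 2 - k) := by
    rw [show (↑(m + 1) - k : ℤ) = (m + 2 - k) - 1 by push_cast; ring, invFactorial_sub_one]
    push_cast; ring
  have hq : invFactorial (2 * (k : ℤ) - ↑(m + 1)) =
      (2 * k - m) * invFactorial (2 * (k : ℤ) - m) := by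
    rw [show 2 * (k : ℤ) - ↑(m + 1) = (2 * k - m) - 1 by push_cast; ring, invFactorial_sub_one]
    push_cast; ring
  rw [summand, baseTerm, hfac, hfac', hp, hq]
  field_simp
  ring

theorem summand_self (m k : ℕ) :
    summand m k = (2 * m + 4) * (2 * m + 3) * (2 * m + 2) * (2 * m + 1) *
      (m + 1 - k) * (m + 2 - k) * baseTerm m k := by
  have hp : invFactorial ((m : ℤ) - k) =
      (m + 1 - k) * (m + 2 - k) * invFactorial ((m : ℤ) + 2 - k) := by
    rw [show ((m : ℤ) - k) = (m + 2 - k) - 2 by ring, invFactorial_sub_two]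
    push_cast; ring
  rw [summand, baseTerm, factorial_two_mul_add_four, hp]
  field_simp

theorem certificate_self (m k : ℕ) :
    certificate m k = 48 * certificateFactor (m + 2) k * (1/400) * (2 * m + 4) * (2 * m + 3) *
      (2 * m + 2) * (2 * m + 1) * (2 * k - m - 1) * (2 * k - m) * baseTerm m k := by
  have hq : invFactorial (2 * (k : ℤ) - m - 2) =
      (2 * k - m - 1) * (2 * k - m) * invFactorial (2 * (k : ℤ) - m) := by
    rw [show 2 * (k : ℤ) - m - 2 = (2 * k - m) - 2 by ring, invFactorial_sub_two]
    push_cast; ring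
  rw [certificate, baseTerm, factorial_two_mul_add_four, hq]
  field_simp
  ring

theorem certificate_succ (m k : ℕ) :
    certificate m (k + 1) = 48 * certificateFactor (m + 2) (k + 1) * (1/400) * (-10/3) *
      (2 * m + k + 1) * (2 * m + 4) * (2 * m + 3) * (2 * m + 2) * (2 * m + 1) *
      (m + 2 - k) * baseTerm m k := by
  have hp : invFactorial ((m : ℤ) + 2 - ↑(k + 1)) =
      (m + 2 - k) * invFactorial ((m : ℤ) + 2 - k) := by
    rw [show (m : ℤ) + 2 - ↑(k + 1) = (m + 2 - k) - 1 by push_cast; ring, invFactorial_sub_one]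
    push_cast; ring
  have hq : 2 * ((k + 1 : ℕ) : ℤ) - m - 2 = 2 * k - m := by push_cast; ring
  rw [certificate, baseTerm, factorial_two_mul_add_four, hp, hq,
    show 2 * m + (k + 1) = 2 * m + k + 1 from rfl, Nat.factorial_succ]
  push_cast
  field_simp
  ring

-- `recCoeffᵢ m = (2m+1) sᵢ(m+2) / (2(m+2-i)+1)`, clearing the denominators `2n+1` of `a_n`.
def recCoeff₀ (m : ℚ) : ℚ :=
  128 * (m + 2) * (m + 1) * (2 * m + 3) * (5 * m + 4) * (2 * m + 1)
def recCoeff₁ (m : ℚ) : ℚ :=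
  80 * (m + 1) * (5 * m + 9) * (15 * m ^ 2 + 30 * m + 14) * (2 * m + 1)
def recCoeff₂ (m : ℚ) : ℚ :=
  3 * (5 * m + 9) * (5 * m + 6) * (5 * m + 4) * (5 * m + 3) * (5 * m + 2)

theorem summand_telescoping (m k : ℕ) :
    recCoeff₀ m * summand (m + 2) k - recCoeff₁ m * summand (m + 1) k +
      recCoeff₂ m * summand m k = certificate m (k + 1) - certificate m k := by
  rw [summand_add_two, summand_add_one, summand_self, certificate_succ, certificate_self]
  simp only [recCoeff₀, recCoeff₁, recCoeff₂, certificateFactor]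
  ring

theorem sum_summand_recurrence (m N : ℕ) (hN : m + 2 < N) :
    recCoeff₀ m * ∑ k ∈ range N, summand (m + 2) k
      - recCoeff₁ m * ∑ k ∈ range N, summand (m + 1) k
      + recCoeff₂ m * ∑ k ∈ range N, summand m k = 0 := by
  have hN : certificate m N = 0 := by
    rw [certificate, invFactorial_of_neg (by omega), mul_zero, zero_mul]
  have h0 : certificate m 0 = 0 := by
    rw [certificate, invFactorial_of_neg (show 2 * ((0 : ℕ) : ℤ) - m - 2 < 0 by omega),
      mul_zero]
  simp only [mul_sum, ← sum_sub_distrib, ← sum_add_distrib, summand_telescoping, sum_range_sub,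
    hN, h0, sub_zero]

theorem neg_one_twentieth_pow_mul (b c : ℕ) :
    (-1/20 : ℚ) ^ (2 * b + c) * (-10/3) ^ (b + c) = (-1) ^ b * (1/6) ^ c * (1/120) ^ b := by
  rw [pow_add, pow_add, pow_mul, mul_mul_mul_comm, ← mul_pow, ← mul_pow,
    show (-1) ^ b * (1/6 : ℚ) ^ c * (1/120) ^ b = ((-1) * (1/120)) ^ b * (1/6) ^ c by
      rw [mul_pow]; ring]
  norm_num

theorem explicit_eq_summand {n k : ℕ} (hk : k ≤ n) :
    (-1 : ℚ) ^ (n - k) * (Nat.choose (2 * n + k) k : ℚ) * (Nat.choose k (n - k) : ℚ) *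
      (1/6 : ℚ) ^ (2 * (k : ℤ) - (n : ℤ)) * (1/120 : ℚ) ^ ((n : ℤ) - (k : ℤ)) =
      summand n k := by
  rcases lt_or_ge (2 * k) n with h | h
  · rw [Nat.choose_eq_zero_of_lt (by omega : k < n - k), summand_eq_zero (Or.inr h)]
    simp
  obtain ⟨b, c, rfl, rfl⟩ : ∃ b c, k = b + c ∧ n = 2 * b + c :=
    ⟨n - k, 2 * k - n, by omega, by omega⟩
  have hb : ((2 * b + c : ℕ) : ℤ) - ↑(b + c) = b := by push_cast; ring
  have hc : 2 * ((b + c : ℕ) : ℤ) - ↑(2 * b + c) = c := by push_cast; ring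
  rw [summand, hb, hc, zpow_natCast, zpow_natCast, invFactorial_natCast, invFactorial_natCast,
    show 2 * b + c - (b + c) = b by omega,
    show 2 * (2 * b + c) + (b + c) = b + c + 2 * (2 * b + c) by ring, Nat.cast_add_choose,
    Nat.cast_add_choose, neg_one_twentieth_pow_mul]
  field_simp

theorem sum_Icc_eq_sum_range_summand (n N : ℕ) (hN : n < N) :
    ∑ k ∈ Icc (n / 2) n, (-1 : ℚ) ^ (n - k) * (Nat.choose (2 * n + k) k : ℚ) *
      (Nat.choose k (n - k) : ℚ) * (1/6 : ℚ) ^ (2 * (k : ℤ) - (n : ℤ)) *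
      (1/120 : ℚ) ^ ((n : ℤ) - (k : ℤ)) = ∑ k ∈ range N, summand n k := by
  have hsub : Icc (n / 2) n ⊆ range N := fun k hk => by
    rw [mem_Icc] at hk; rw [mem_range]; omega
  have hzero (k : ℕ) (hk : k ∈ range N) (hk' : k ∉ Icc (n / 2) n) : summand n k = 0 := by
    rw [mem_range] at hk; rw [mem_Icc] at hk'
    exact summand_eq_zero (by omega)
  rw [← sum_subset hsub hzero]
  exact sum_congr rfl fun k hk => explicit_eq_summand (mem_Icc.1 hk).2

end ZeilbergerRecurrence

open ZeilbergerRecurrence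

/-- The sequence `a_n` given by the explicit binomial sum satisfies the
three-term recurrence found by Zeilberger's algorithm. -/
theorem zeilberger_recurrence
    (a : ℕ → ℚ)
    (ha : ∀ n : ℕ, a n =
      (1 / (2 * n + 1 : ℚ)) *
        ∑ k ∈ Finset.Icc (n / 2) n,
          (-1 : ℚ) ^ (n - k) * (Nat.choose (2 * n + k) k : ℚ) *
            (Nat.choose k (n - k) : ℚ) * (1/6 : ℚ) ^ (2 * (k : ℤ) - (n : ℤ)) *
            (1/120 : ℚ) ^ ((n : ℤ) - (k : ℤ)))
    (s0 s1 s2 : ℕ → ℚ)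
    (hs0 : ∀ n : ℕ, s0 n = 128 * n * (n - 1) * (2 * n + 1) * (2 * n - 1) * (5 * n - 6))
    (hs1 : ∀ n : ℕ, s1 n = 80 * (n - 1) * (2 * n - 1) * (5 * n - 1) * (15 * n ^ 2 - 30 * n + 14))
    (hs2 : ∀ n : ℕ, s2 n = 3 * (5 * n - 1) * (5 * n - 4) * (5 * n - 6) * (5 * n - 7) * (5 * n - 8)) :
    ∀ n : ℕ, 2 ≤ n → s0 n * a n - s1 n * a (n - 1) + s2 n * a (n - 2) = 0 := by
  intro n hn
  obtain ⟨m, rfl⟩ : ∃ m, n = m + 2 := ⟨n - 2, by omega⟩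
  have ha' (i : ℕ) (hi : i < m + 3) :
      a i = 1 / (2 * i + 1) * ∑ k ∈ range (m + 3), summand i k := by
    rw [ha, sum_Icc_eq_sum_range_summand i _ hi]
  have key := sum_summand_recurrence m (m + 3) (by omega)
  rw [show m + 2 - 1 = m + 1 from rfl, show m + 2 - 2 = m from rfl, ha' (m + 2) (by omega),
    ha' (m + 1) (by omega), ha' m (by omega), hs0, hs1, hs2]
  generalize ∑ k ∈ range (m + 3), summand (m + 2) k = S₂ at key ⊢
  generalize ∑ k ∈ range (m + 3), summand (m + 1) k = S₁ at key ⊢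
  generalize ∑ k ∈ range (m + 3), summand m k = S₀ at key ⊢
  simp only [recCoeff₀, recCoeff₁, recCoeff₂] at key
  push_cast
  field_simp
  linear_combination (2 * (m : ℚ) + 3) * key
end

section
/- Let b_n be the sequence of rationals defined by b_0 = 1, b_1 = 1, and the recurrence s_0(n)·b_n = s_1(n)·b_{n-1} - s_2(n)·b_{n-2} for n ≥ 2, where s_0(n) = 128n(n-1)(2n+1)(2n-1)(5n-6), s_1(n) = 80(n-1)(2n-1)(5n-1)(15n^2-30n+14), s_2(n) = 3(5n-1)(5n-4)(5n-6)(5n-7)(5n-8). Then b_n ≥ b_{n-1} > 0 for all n ≥ 1; in particular all b_n are positive. -/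
/-!
Writing the recurrence as `s₀ bₙ = (s₁ - s₂) bₙ₋₁ + s₂ (bₙ₋₁ - bₙ₋₂)`, an increasing positive
prefix stays increasing as soon as `s₀ > 0`, `s₂ ≥ 0` and `s₀ ≤ s₁ - s₂`. For the given
polynomials these three inequalities hold for `n ≥ 2`: after substituting `n = m + 2` every
coefficient in `m` is positive.
-/

section ThreeTermRecurrence

variable {K : Type*} [Field K] [LinearOrder K] [IsStrictOrderedRing K]
  {s0 s1 s2 b : ℕ → K}

theorem le_succ_of_threeTermRecurrence (hs0 : ∀ n, 0 < s0 (n + 2)) (hs2 : ∀ n, 0 ≤ s2 (n + 2))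
    (hdom : ∀ n, s0 (n + 2) ≤ s1 (n + 2) - s2 (n + 2))
    (hrec : ∀ n, s0 (n + 2) * b (n + 2) = s1 (n + 2) * b (n + 1) - s2 (n + 2) * b n)
    {n : ℕ} (hpos : 0 < b (n + 1)) (hle : b n ≤ b (n + 1)) : b (n + 1) ≤ b (n + 2) := by
  refine le_of_mul_le_mul_left ?_ (hs0 n)
  calc s0 (n + 2) * b (n + 1)
      ≤ (s1 (n + 2) - s2 (n + 2)) * b (n + 1) := mul_le_mul_of_nonneg_right (hdom n) hpos.le
    _ ≤ (s1 (n + 2) - s2 (n + 2)) * b (n + 1) + s2 (n + 2) * (b (n + 1) - b n) :=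
        le_add_of_nonneg_right (mul_nonneg (hs2 n) (sub_nonneg.mpr hle))
    _ = s0 (n + 2) * b (n + 2) := by rw [hrec n]; ring

theorem monotone_and_pos_of_threeTermRecurrence (hs0 : ∀ n, 0 < s0 (n + 2))
    (hs2 : ∀ n, 0 ≤ s2 (n + 2)) (hdom : ∀ n, s0 (n + 2) ≤ s1 (n + 2) - s2 (n + 2))
    (hrec : ∀ n, s0 (n + 2) * b (n + 2) = s1 (n + 2) * b (n + 1) - s2 (n + 2) * b n)
    (hb0 : 0 < b 0) (hb01 : b 0 ≤ b 1) : Monotone b ∧ ∀ n, 0 < b n := by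
  have key : ∀ n, 0 < b n ∧ b n ≤ b (n + 1) := by
    intro n
    induction n with
    | zero => exact ⟨hb0, hb01⟩
    | succ n ih =>
      have hpos : 0 < b (n + 1) := ih.1.trans_le ih.2
      exact ⟨hpos, le_succ_of_threeTermRecurrence hs0 hs2 hdom hrec hpos ih.2⟩
  exact ⟨monotone_nat_of_le_succ fun n => (key n).2, fun n => (key n).1⟩

end ThreeTermRecurrence

/-- The sequence `b_n` with `b_0 = b_1 = 1` satisfying the three-term
recurrence `s_0(n) b_n = s_1(n) b_{n-1} - s_2(n) b_{n-2}` is increasing and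
positive: `b_n ≥ b_{n-1} > 0` for all `n ≥ 1`. -/
theorem auxiliary_sequence_positive
    (s0 s1 s2 : ℕ → ℚ)
    (hs0 : ∀ n : ℕ, s0 n = 128 * n * (n - 1) * (2 * n + 1) * (2 * n - 1) * (5 * n - 6))
    (hs1 : ∀ n : ℕ, s1 n = 80 * (n - 1) * (2 * n - 1) * (5 * n - 1) * (15 * n ^ 2 - 30 * n + 14))
    (hs2 : ∀ n : ℕ, s2 n = 3 * (5 * n - 1) * (5 * n - 4) * (5 * n - 6) * (5 * n - 7) * (5 * n - 8))
    (b : ℕ → ℚ) (hb0 : b 0 = 1) (hb1 : b 1 = 1)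
    (hrec : ∀ n : ℕ, 2 ≤ n → s0 n * b n = s1 n * b (n - 1) - s2 n * b (n - 2)) :
    ∀ n : ℕ, 1 ≤ n → b n ≥ b (n - 1) ∧ b (n - 1) > 0 ∧ b n > 0 := by
  have hs0_pos : ∀ n, 0 < s0 (n + 2) := fun n => by
    rw [hs0]; push_cast; ring_nf; positivity
  have hs2_nonneg : ∀ n, 0 ≤ s2 (n + 2) := fun n => by
    rw [hs2]; push_cast; ring_nf; positivity
  have hdom : ∀ n, s0 (n + 2) ≤ s1 (n + 2) - s2 (n + 2) := fun n => by
    rw [← sub_nonneg, hs0, hs1, hs2]; push_cast; ring_nf; positivity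
  have hrec' : ∀ n, s0 (n + 2) * b (n + 2) = s1 (n + 2) * b (n + 1) - s2 (n + 2) * b n :=
    fun n => hrec (n + 2) (by omega)
  obtain ⟨hmono, hpos⟩ := monotone_and_pos_of_threeTermRecurrence hs0_pos hs2_nonneg hdom hrec'
    (by simp [hb0]) (by simp [hb0, hb1])
  rintro (_ | n) hn
  · omega
  · exact ⟨hmono n.le_succ, hpos n, hpos (n + 1)⟩
end

section
/- For all n ≥ 1, the coefficient of t^{2n-1} in the Maclaurin series of tan(t) equals 2^{2n}(2^{2n}-1)|B_{2n}|/(2n)!, where B_{2n} is the 2n-th Bernoulli number. -/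
/-!
The Taylor series of `tan` at `0` satisfies `T · cos = sin` as formal power series, by the Leibniz
rule applied to `tan · cos = sin` near `0`. Over `ℂ`, `2 cos = e^{iX} + e^{-iX}` and
`2i sin = e^{iX} - e^{-iX}`, so with `u = e^{2iX}` this becomes `T (u + 1) = -i (u - 1)`.
The generating function `B(t) (e^t - 1) = t` of the Bernoulli numbers at `t = 2iX` and `t = 4iX`
then gives `X T = B(2iX) - B(4iX) - iX`, whose coefficient of `X^{2n}` is
`(-1)^{n+1} 2^{2n} (2^{2n} - 1) B_{2n} / (2n)!`. Finally `(-1)^{n+1} B_{2n} > 0` because it is a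
positive multiple of `ζ(2n)`.
-/

open PowerSeries Nat Topology
open scoped ContDiff

section Taylor

variable {𝕜 : Type*} [NontriviallyNormedField 𝕜]

noncomputable def taylorSeries (f : 𝕜 → 𝕜) (x : 𝕜) : 𝕜⟦X⟧ :=
  mk fun n ↦ iteratedDeriv n f x / n !

@[simp]
lemma coeff_taylorSeries (f : 𝕜 → 𝕜) (x : 𝕜) (n : ℕ) :
    coeff n (taylorSeries f x) = iteratedDeriv n f x / n ! :=
  coeff_mk _ _

lemma taylorSeries_congr {f g : 𝕜 → 𝕜} {x : 𝕜} (h : f =ᶠ[𝓝 x] g) :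
    taylorSeries f x = taylorSeries g x := by
  ext n
  simp [h.iteratedDeriv_eq]

lemma taylorSeries_mul [CharZero 𝕜] {f g : 𝕜 → 𝕜} {x : 𝕜} (hf : ContDiffAt 𝕜 ∞ f x)
    (hg : ContDiffAt 𝕜 ∞ g x) :
    taylorSeries (f * g) x = taylorSeries f x * taylorSeries g x := by
  ext n
  rw [coeff_taylorSeries, iteratedDeriv_mul (hf.of_le (mod_cast le_top))
    (hg.of_le (mod_cast le_top)), coeff_mul, Finset.Nat.sum_antidiagonal_eq_sum_range_succ_mk,
    Finset.sum_div]
  refine Finset.sum_congr rfl fun i hi ↦ ?_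
  have hin : i ≤ n := Nat.lt_succ_iff.mp (Finset.mem_range.mp hi)
  have hn : (n ! : 𝕜) ≠ 0 := Nat.cast_ne_zero.2 n.factorial_ne_zero
  rw [coeff_taylorSeries, coeff_taylorSeries, Nat.cast_choose 𝕜 hin]
  field_simp

end Taylor

namespace Real

lemma taylorSeries_sin : taylorSeries sin 0 = PowerSeries.sin ℝ := by
  ext n
  obtain ⟨m, rfl | rfl⟩ := Nat.even_or_odd' n
  · simp [PowerSeries.sin]
  · simp [PowerSeries.sin, Nat.mul_add_div, div_eq_mul_inv]

lemma taylorSeries_cos : taylorSeries cos 0 = PowerSeries.cos ℝ := by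
  ext n
  obtain ⟨m, rfl | rfl⟩ := Nat.even_or_odd' n
  · simp [PowerSeries.cos, div_eq_mul_inv]
  · simp [PowerSeries.cos]

lemma taylorSeries_tan_mul_cos :
    taylorSeries tan 0 * PowerSeries.cos ℝ = PowerSeries.sin ℝ := by
  have hcos : cos 0 ≠ 0 := by simp
  rw [← taylorSeries_sin, ← taylorSeries_cos,
    ← taylorSeries_mul (contDiffAt_tan.2 hcos) contDiff_cos.contDiffAt]
  refine taylorSeries_congr ?_
  filter_upwards [continuous_cos.continuousAt.eventually_ne hcos] with x hx
  simp [tan_eq_sin_div_cos, hx]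

end Real

namespace PowerSeries

section Algebra

variable {A : Type*} [CommRing A] [Algebra ℚ A] {i : A}

lemma rescale_exp_add_rescale_exp_neg (hi : i ^ 2 = -1) :
    rescale i (exp A) + rescale (-i) (exp A) = C 2 * cos A := by
  ext n
  simp only [map_add, coeff_rescale, coeff_exp, coeff_C_mul, cos, coeff_mk]
  obtain ⟨m, rfl | rfl⟩ := Nat.even_or_odd' n
  · rw [if_pos (even_two_mul m), Nat.mul_div_cancel_left m two_pos, neg_pow, pow_mul, pow_mul, hi,
      ← mul_one_div ((-1 : ℚ) ^ m), map_mul, map_pow, map_neg, map_one]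
    ring
  · rw [if_neg (Nat.not_even_two_mul_add_one m), neg_pow, pow_succ, pow_succ, pow_mul, pow_mul, hi]
    ring

lemma rescale_exp_sub_rescale_exp_neg (hi : i ^ 2 = -1) :
    rescale i (exp A) - rescale (-i) (exp A) = C (2 * i) * sin A := by
  ext n
  simp only [map_sub, coeff_rescale, coeff_exp, coeff_C_mul, sin, coeff_mk]
  obtain ⟨m, rfl | rfl⟩ := Nat.even_or_odd' n
  · rw [if_pos (even_two_mul m), neg_pow, pow_mul, pow_mul, hi]
    ring
  · rw [if_neg (Nat.not_even_two_mul_add_one m), Nat.mul_add_div two_pos,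
      Nat.div_eq_of_lt one_lt_two, add_zero, neg_pow, pow_succ, pow_succ, pow_mul, pow_mul, hi,
      ← mul_one_div ((-1 : ℚ) ^ m), map_mul, map_pow, map_neg, map_one]
    ring

lemma rescale_bernoulliPowerSeries_mul_exp_sub_one (a : A) :
    rescale a (bernoulliPowerSeries A) * (rescale a (exp A) - 1) = C a * X := by
  simpa using congrArg (rescale a) (bernoulliPowerSeries_mul_exp_sub_one A)

lemma X_mul_eq_of_mul_cos_eq_sin [IsDomain A] (hi : i ^ 2 = -1) {S : A⟦X⟧}
    (hS : S * cos A = sin A) :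
    X * S = rescale (2 * i) (bernoulliPowerSeries A) - rescale (4 * i) (bernoulliPowerSeries A)
      - C i * X := by
  set v := rescale i (exp A)
  set u := rescale (2 * i) (exp A)
  have hvw : v * rescale (-i) (exp A) = 1 := by simp [v, exp_mul_exp_eq_exp_add]
  have hvv : v * v = u := by rw [exp_mul_exp_eq_exp_add, ← two_mul]
  have huu : u * u = rescale (4 * i) (exp A) := by rw [exp_mul_exp_eq_exp_add]; ring_nf
  have hSu : S * (u + 1) = -C i * (u - 1) := by
    have hc := rescale_exp_add_rescale_exp_neg hi
    have hs := rescale_exp_sub_rescale_exp_neg hi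
    have hI : C i * C i = -1 := by rw [← map_mul, ← sq, hi, map_neg, map_one]
    rw [map_mul] at hs
    linear_combination (-(S + C i)) * hvv - (S - C i) * hvw + S * v * hc + C i * v * hs
      + C 2 * v * hS + C 2 * v * sin A * hI
  have hu : u * u - 1 ≠ 0 := by
    have hi0 : i ≠ 0 := by rintro rfl; simp at hi
    have := algebraRat.charZero A
    rw [huu]
    intro h
    simpa [coeff_rescale, hi0] using congrArg (coeff 1) h
  refine mul_right_cancel₀ hu ?_
  have h2 := rescale_bernoulliPowerSeries_mul_exp_sub_one (2 * i)
  have h4 := rescale_bernoulliPowerSeries_mul_exp_sub_one (4 * i)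
  rw [← huu] at h4
  simp only [map_mul, map_ofNat] at h2 h4
  linear_combination X * (u - 1) * hSu - (u + 1) * h2 + h4

end Algebra

lemma coeff_two_mul_rescale_bernoulliPowerSeries_sub (n : ℕ) :
    coeff (2 * n) (rescale (2 * Complex.I) (bernoulliPowerSeries ℂ)
      - rescale (4 * Complex.I) (bernoulliPowerSeries ℂ) - C Complex.I * X) =
      ((-1) ^ (n + 1) * 2 ^ (2 * n) * (2 ^ (2 * n) - 1) * bernoulli (2 * n) / (2 * n)! : ℂ) := by
  have e2 : (2 * Complex.I) ^ (2 * n) = 2 ^ (2 * n) * (-1) ^ n := by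
    rw [mul_pow, pow_mul Complex.I, Complex.I_sq]
  have e4 : (4 * Complex.I) ^ (2 * n) = 2 ^ (2 * n) * 2 ^ (2 * n) * (-1) ^ n := by
    rw [show 4 * Complex.I = 2 * (2 * Complex.I) by ring, mul_pow, e2, mul_assoc]
  simp only [map_sub, coeff_rescale, bernoulliPowerSeries, coeff_mk, coeff_C_mul, coeff_X,
    if_neg (show 2 * n ≠ 1 by omega), mul_zero, sub_zero, e2, e4, eq_ratCast, Rat.cast_div,
    Rat.cast_natCast]
  ring

end PowerSeries

lemma abs_bernoulli_two_mul {n : ℕ} (hn : n ≠ 0) :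
    |bernoulli (2 * n)| = (-1) ^ (n + 1) * bernoulli (2 * n) := by
  have hsign : (0 : ℚ) < (-1) ^ (n + 1) * bernoulli (2 * n) := by
    have hζ := le_hasSum (hasSum_zeta_nat hn) 1 fun j _ ↦ by positivity
    have hc : (0 : ℝ) < 2 ^ (2 * n - 1) * Real.pi ^ (2 * n) / (2 * n)! := by positivity
    have hpos : (0 : ℝ) < (-1) ^ (n + 1) * bernoulli (2 * n) * (2 ^ (2 * n - 1) *
        Real.pi ^ (2 * n) / (2 * n)!) := by
      simp only [Nat.cast_one, one_pow, div_one] at hζ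
      exact one_pos.trans_le (hζ.trans_eq (by ring))
    exact_mod_cast (mul_pos_iff_of_pos_right hc).1 hpos
  rw [← abs_of_pos hsign, abs_mul, abs_pow, abs_neg, abs_one, one_pow, one_mul]

lemma Real.iteratedDeriv_tan_two_mul_sub_one {n : ℕ} (hn : n ≠ 0) :
    iteratedDeriv (2 * n - 1) tan 0 / (2 * n - 1)! =
      (-1) ^ (n + 1) * 2 ^ (2 * n) * (2 ^ (2 * n) - 1) * bernoulli (2 * n) / (2 * n)! := by
  have hS :
      map Complex.ofRealHom (taylorSeries tan 0) * PowerSeries.cos ℂ = PowerSeries.sin ℂ := by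
    simpa using congrArg (map Complex.ofRealHom) taylorSeries_tan_mul_cos
  have h := congrArg (coeff (2 * n - 1 + 1)) (X_mul_eq_of_mul_cos_eq_sin Complex.I_sq hS)
  rw [coeff_succ_X_mul, coeff_map, coeff_taylorSeries, show 2 * n - 1 + 1 = 2 * n by omega,
    coeff_two_mul_rescale_bernoulliPowerSeries_sub, Complex.ofRealHom_eq_coe] at h
  exact_mod_cast h

/-- For all `n ≥ 1`, the coefficient of `t^{2n-1}` in the Maclaurin series of
`tan` equals `2^{2n}(2^{2n}-1)|B_{2n}|/(2n)!`, where `B_{2n}` is the `2n`-th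
Bernoulli number. -/
theorem tan_maclaurin_coefficient (n : ℕ) (hn : 1 ≤ n) :
    iteratedDeriv (2 * n - 1) Real.tan 0 / (Nat.factorial (2 * n - 1)) =
      2 ^ (2 * n) * (2 ^ (2 * n) - 1) * |((bernoulli (2 * n) : ℚ) : ℝ)| /
        (Nat.factorial (2 * n)) := by
  have hn0 : n ≠ 0 := by omega
  rw [← Rat.cast_abs, abs_bernoulli_two_mul hn0, Real.iteratedDeriv_tan_two_mul_sub_one hn0]
  push_cast
  ring
end
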